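/- arXiv:0803.3553 — 2 statements merged into one kernel-verified Lean document; each statement's English description precedes it below -/
import Mathlib

section
/- Let a_1, ..., a_m be elements of L = GF(2^n) and k_1, ..., k_m positive integers, and set Q(x) = \sum_{i=1}^m a_i x^{2^{k_i}+1} and L(u) = \sum_{i=1}^m ( a_i u^{2^{k_i}} + a_i^{2^{-k_i}} u^{2^{-k_i}} ). If u in L satisfies L(u) = 0, then for every x in L one has Tr(Q(x + u)) = Tr(Q(x)) + Tr(Q(u)). In particular, the map u \mapsto (-1)^{Tr(Q(u))} is a character of the additive group K = { u \in L : L(u) = 0 }. -/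
noncomputable instance {n : ℕ} : Fintype (GaloisField 2 n) := Fintype.ofFinite _

/-- `ipow j x` is `x^{2^{-j}}`, the unique element of `GF(2^n)` whose `2^j`-th power is `x`
(the inverse of the `j`-th iterate of the Frobenius automorphism). -/
noncomputable def ipow {n : ℕ} (j : ℕ) (x : GaloisField 2 n) : GaloisField 2 n :=
  Function.invFun (fun y : GaloisField 2 n => y ^ 2 ^ j) x

/-!
In characteristic 2 the cross terms of `Q(x + u)` are `∑ aᵢ u x^{2^{kᵢ}} + aᵢ u^{2^{kᵢ}} x`.
The trace is invariant under Frobenius, so `Tr(aᵢ u x^{2^{kᵢ}}) = Tr(aᵢ^{2^{-kᵢ}} u^{2^{-kᵢ}} x)`,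
and the trace of the cross terms becomes `Tr(L(u) x)`, which vanishes when `L(u) = 0`.
-/

theorem add_pow_two_pow_add_one {R : Type*} [CommRing R] [CharP R 2] (k : ℕ) (x u : R) :
    (x + u) ^ (2 ^ k + 1) =
      x ^ (2 ^ k + 1) + u ^ (2 ^ k + 1) + (u * x ^ 2 ^ k + u ^ 2 ^ k * x) := by
  rw [pow_succ, add_pow_char_pow]
  ring

theorem FiniteField.trace_pow_card_pow {K L : Type*} [Field K] [Fintype K] [Field L]
    [Algebra K L] [Algebra.IsAlgebraic K L] (j : ℕ) (x : L) :
    Algebra.trace K L (x ^ Fintype.card K ^ j) = Algebra.trace K L x := by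
  rw [← congrFun (coe_frobeniusAlgEquivOfAlgebraic_iterate K L j) x, ← AlgEquiv.coe_pow,
    Algebra.trace_eq_of_algEquiv]

theorem ipow_pow {n : ℕ} (j : ℕ) (x : GaloisField 2 n) : ipow j x ^ 2 ^ j = x :=
  Function.rightInverse_invFun (bijective_iterateFrobenius (GaloisField 2 n) 2 j).surjective x

theorem trace_mul_mul_pow_two_pow {n : ℕ} (k : ℕ) (a u x : GaloisField 2 n) :
    Algebra.trace (ZMod 2) (GaloisField 2 n) (a * u * x ^ 2 ^ k) =
      Algebra.trace (ZMod 2) (GaloisField 2 n) (ipow k a * ipow k u * x) := by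
  have h := FiniteField.trace_pow_card_pow (K := ZMod 2) k (ipow k a * ipow k u * x)
  rwa [ZMod.card, mul_pow, mul_pow, ipow_pow, ipow_pow] at h

theorem trace_mul_add_pow_two_pow_add_one {n : ℕ} (k : ℕ) (a x u : GaloisField 2 n) :
    Algebra.trace (ZMod 2) (GaloisField 2 n) (a * (x + u) ^ (2 ^ k + 1)) =
      Algebra.trace (ZMod 2) (GaloisField 2 n) (a * x ^ (2 ^ k + 1)) +
        Algebra.trace (ZMod 2) (GaloisField 2 n) (a * u ^ (2 ^ k + 1)) +
          Algebra.trace (ZMod 2) (GaloisField 2 n) ((a * u ^ 2 ^ k + ipow k a * ipow k u) * x) := by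
  simp only [add_pow_two_pow_add_one, mul_add, add_mul, map_add, ← mul_assoc,
    trace_mul_mul_pow_two_pow]
  ring

theorem trace_sum_mul_add_pow_two_pow_add_one {n : ℕ} {ι : Type*} [Fintype ι]
    (a : ι → GaloisField 2 n) (k : ι → ℕ) (x u : GaloisField 2 n) :
    Algebra.trace (ZMod 2) (GaloisField 2 n) (∑ i, a i * (x + u) ^ (2 ^ k i + 1)) =
      Algebra.trace (ZMod 2) (GaloisField 2 n) (∑ i, a i * x ^ (2 ^ k i + 1)) +
        Algebra.trace (ZMod 2) (GaloisField 2 n) (∑ i, a i * u ^ (2 ^ k i + 1)) +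
          Algebra.trace (ZMod 2) (GaloisField 2 n)
            ((∑ i, (a i * u ^ 2 ^ k i + ipow (k i) (a i) * ipow (k i) u)) * x) := by
  rw [Finset.sum_mul]
  simp only [map_sum, trace_mul_add_pow_two_pow_add_one, Finset.sum_add_distrib]

theorem ZMod.ite_eq_zero_one_neg_one_add (a b : ZMod 2) :
    (if a + b = 0 then (1 : ℤ) else -1) =
      (if a = 0 then 1 else -1) * (if b = 0 then 1 else -1) := by
  fin_cases a <;> fin_cases b <;> rfl

theorem stmt_8_general (n m : ℕ) (a : Fin m → GaloisField 2 n) (kk : Fin m → ℕ)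
    (u : GaloisField 2 n)
    (hu : (∑ i, (a i * u ^ 2 ^ kk i + ipow (kk i) (a i) * ipow (kk i) u)) = 0) :
    (∀ x : GaloisField 2 n,
        Algebra.trace (ZMod 2) (GaloisField 2 n) (∑ i, a i * (x + u) ^ (2 ^ kk i + 1)) =
          Algebra.trace (ZMod 2) (GaloisField 2 n) (∑ i, a i * x ^ (2 ^ kk i + 1)) +
            Algebra.trace (ZMod 2) (GaloisField 2 n) (∑ i, a i * u ^ (2 ^ kk i + 1))) ∧
      (∀ v : GaloisField 2 n,
        (∑ i, (a i * v ^ 2 ^ kk i + ipow (kk i) (a i) * ipow (kk i) v)) = 0 →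
          (if Algebra.trace (ZMod 2) (GaloisField 2 n)
              (∑ i, a i * (u + v) ^ (2 ^ kk i + 1)) = 0 then (1 : ℤ) else -1) =
            (if Algebra.trace (ZMod 2) (GaloisField 2 n)
                (∑ i, a i * u ^ (2 ^ kk i + 1)) = 0 then (1 : ℤ) else -1) *
              (if Algebra.trace (ZMod 2) (GaloisField 2 n)
                  (∑ i, a i * v ^ (2 ^ kk i + 1)) = 0 then (1 : ℤ) else -1)) := by
  refine ⟨fun x => ?_, fun v hv => ?_⟩
  · rw [trace_sum_mul_add_pow_two_pow_add_one, hu, zero_mul, map_zero, add_zero]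
  · rw [trace_sum_mul_add_pow_two_pow_add_one, hv, zero_mul, map_zero, add_zero,
      ZMod.ite_eq_zero_one_neg_one_add]

/-- With `Q(x) = ∑ aᵢ x^{2^{kᵢ}+1}` and `L(u) = ∑ (aᵢ u^{2^{kᵢ}} + aᵢ^{2^{-kᵢ}} u^{2^{-kᵢ}})`:
if `L(u) = 0` then `Tr(Q(x+u)) = Tr(Q(x)) + Tr(Q(u))` for all `x`; in particular
`u ↦ (-1)^{Tr(Q(u))}` is a character of the additive group `K = ker L`. -/
theorem stmt_8 (n m : ℕ) (hn : 0 < n) (a : Fin m → GaloisField 2 n) (kk : Fin m → ℕ)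
    (hkk : ∀ i, 0 < kk i) (u : GaloisField 2 n)
    (hu : (∑ i, (a i * u ^ 2 ^ kk i + ipow (kk i) (a i) * ipow (kk i) u)) = 0) :
    (∀ x : GaloisField 2 n,
        Algebra.trace (ZMod 2) (GaloisField 2 n) (∑ i, a i * (x + u) ^ (2 ^ kk i + 1)) =
          Algebra.trace (ZMod 2) (GaloisField 2 n) (∑ i, a i * x ^ (2 ^ kk i + 1)) +
            Algebra.trace (ZMod 2) (GaloisField 2 n) (∑ i, a i * u ^ (2 ^ kk i + 1))) ∧
      (∀ v : GaloisField 2 n,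
        (∑ i, (a i * v ^ 2 ^ kk i + ipow (kk i) (a i) * ipow (kk i) v)) = 0 →
          (if Algebra.trace (ZMod 2) (GaloisField 2 n)
              (∑ i, a i * (u + v) ^ (2 ^ kk i + 1)) = 0 then (1 : ℤ) else -1) =
            (if Algebra.trace (ZMod 2) (GaloisField 2 n)
                (∑ i, a i * u ^ (2 ^ kk i + 1)) = 0 then (1 : ℤ) else -1) *
              (if Algebra.trace (ZMod 2) (GaloisField 2 n)
                  (∑ i, a i * v ^ (2 ^ kk i + 1)) = 0 then (1 : ℤ) else -1)) :=
  stmt_8_general n m a kk u hu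
end

section
/- Let n be odd, let k be a positive integer with gcd(k, n) = 1, and let b, c be elements of L = GF(2^n), not both zero. Then the equation b u^{2^k} + b^{2^{-k}} u^{2^{-k}} + c u^{2^{3k}} + c^{2^{-3k}} u^{2^{-3k}} = 0 has at most 8 solutions u in L. -/
/-!
Raising the equation to the power `2^{3k}` turns it into `P(u) = 0` for the twisted polynomial
`P = c + b^{2^{2k}} σ + b^{2^{3k}} σ² + c^{2^{3k}} σ³` in `σ = Frob^{2k}`. As `gcd(2k, n) = 1`, the
fixed field of `σ` is `GF(2)`, and the roots of a nonzero twisted polynomial of degree `d` in `σ`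
form a space of dimension at most `d` over the fixed field: dividing by a nonzero root `v` and
applying `σ - 1` maps the roots into those of a twisted polynomial of degree `d - 1`, and the fibres
of this map are cosets of `v · Fix(σ)`.
-/

open Finset Function

theorem Set.ncard_le_mul_ncard_of_mapsTo {α β : Type*} {s : Set α} {t : Set β} {f : α → β}
    (hs : s.Finite) (ht : t.Finite) (hf : Set.MapsTo f s t) {m : ℕ}
    (hm : ∀ b ∈ t, {a ∈ s | f a = b}.ncard ≤ m) : s.ncard ≤ m * t.ncard := by
  classical
  rw [Set.ncard_eq_toFinset_card s hs, Set.ncard_eq_toFinset_card t ht]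
  refine card_le_mul_card_image_of_maps_to (fun a ha => by simpa using hf (by simpa using ha)) m
    fun b hb => ?_
  rw [← Set.ncard_coe_finset]
  simpa using hm b (by simpa using hb)

theorem exists_sum_range_ne_zero {M : Type*} [AddCommGroup M] {f : ℕ → M} {m : ℕ}
    (h : ∃ i ≤ m, f i ≠ 0) : ∃ j ≤ m, ∑ i ∈ range (j + 1), f i ≠ 0 := by
  by_contra! hsum
  obtain ⟨i, hi, hfi⟩ := h
  have hprev : ∑ l ∈ range i, f l = 0 := by
    rcases i with _ | i
    · exact sum_range_zero f
    · exact hsum i (by omega)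
  exact hfi (by simpa [sum_range_succ, hprev] using hsum i hi)

theorem pow_pow_gcd_eq_self {M₀ : Type*} [GroupWithZero M₀] {p m n : ℕ} (hp : p ≠ 0) {x : M₀}
    (hm : x ^ p ^ m = x) (hn : x ^ p ^ n = x) : x ^ p ^ m.gcd n = x := by
  rcases eq_or_ne x 0 with rfl | hx
  · exact zero_pow (pow_ne_zero _ hp)
  have key : ∀ j, x ^ p ^ j = x ↔ x ^ (p ^ j - 1) = 1 := fun j => by
    rw [← pow_sub_one_mul (pow_ne_zero j hp), mul_eq_right₀ hx]
  rw [key] at hm hn ⊢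
  rw [← Nat.pow_sub_one_gcd_pow_sub_one]
  exact pow_gcd_eq_one.mpr ⟨hm, hn⟩

section TwistedPolynomial

variable {L : Type*} [Field L] (σ : L →+* L)

def twistedEval (a : ℕ → L) (d : ℕ) (u : L) : L :=
  ∑ i ∈ range (d + 1), a i * (σ ^ i) u

theorem twistedEval_sub_self (a : ℕ → L) (d : ℕ) (v w : L) :
    twistedEval σ (fun j => -∑ i ∈ range (j + 1), a i * (σ ^ i) v) d (σ w - w) =
      twistedEval σ a (d + 1) (v * w) - (σ ^ (d + 1)) w * twistedEval σ a (d + 1) v := by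
  have hshift : ∀ j, (σ ^ j) (σ w - w) = (σ ^ (j + 1)) w - (σ ^ j) w := fun j => by
    rw [map_sub, pow_succ]
    rfl
  have hparts := sum_range_by_parts (fun i => (σ ^ i) w) (fun i => a i * (σ ^ i) v) (d + 1 + 1)
  simp only [smul_eq_mul, Nat.add_sub_cancel] at hparts
  simp only [twistedEval, hshift, map_mul]
  rw [sum_congr rfl fun i _ => (by ring :
      a i * ((σ ^ i) v * (σ ^ i) w) = (σ ^ i) w * (a i * (σ ^ i) v)), hparts,
    sub_sub_cancel_left, ← sum_neg_distrib]
  exact sum_congr rfl fun i _ => by ring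

theorem ncard_setOf_sub_self_div_eq_le [Finite L] {v : L} (hv : v ≠ 0) (y : L) :
    {u | σ (u / v) - u / v = y}.ncard ≤ (fixedPoints σ).ncard := by
  rcases Set.eq_empty_or_nonempty {u | σ (u / v) - u / v = y} with h | ⟨u₀, hu₀⟩
  · rw [h, Set.ncard_empty]; exact Nat.zero_le _
  calc _ ≤ ((fun t => u₀ + v * t) '' fixedPoints σ).ncard := Set.ncard_le_ncard ?_ (Set.toFinite _)
    _ ≤ _ := Set.ncard_image_le (Set.toFinite _)
  intro u hu
  refine ⟨u / v - u₀ / v, ?_, by field_simp; ring⟩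
  change σ (u / v) - u / v = y at hu
  change σ (u₀ / v) - u₀ / v = y at hu₀
  change σ (u / v - u₀ / v) = u / v - u₀ / v
  rw [map_sub]
  linear_combination hu - hu₀

theorem ncard_setOf_twistedEval_eq_zero_le [Finite L] {d : ℕ} {a : ℕ → L}
    (ha : ∃ i ≤ d, a i ≠ 0) :
    {u | twistedEval σ a d u = 0}.ncard ≤ (fixedPoints σ).ncard ^ d := by
  induction d generalizing a with
  | zero =>
    obtain ⟨i, hi, hai⟩ := ha
    obtain rfl : i = 0 := by omega
    calc {u | twistedEval σ a 0 u = 0}.ncard ≤ ({0} : Set L).ncard :=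
          Set.ncard_le_ncard (fun u hu => by simpa [twistedEval, hai] using hu)
      _ = (fixedPoints σ).ncard ^ 0 := by simp
  | succ d ih =>
    set S := {u | twistedEval σ a (d + 1) u = 0}
    by_cases hS : S ⊆ {0}
    · have hq : 0 < (fixedPoints σ).ncard := (Set.ncard_pos (Set.toFinite _)).mpr ⟨0, map_zero σ⟩
      calc S.ncard ≤ ({0} : Set L).ncard := Set.ncard_le_ncard hS
        _ ≤ _ := by simpa using Nat.one_le_pow _ _ hq
    obtain ⟨v, hvS, hv0 : v ≠ 0⟩ := Set.not_subset.mp hS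
    set c : ℕ → L := fun j => -∑ i ∈ range (j + 1), a i * (σ ^ i) v
    have hc : ∃ j ≤ d, c j ≠ 0 := by
      obtain ⟨i, hi, hai⟩ := ha
      obtain ⟨j, hj, hBj⟩ := exists_sum_range_ne_zero (f := fun i => a i * (σ ^ i) v)
        ⟨i, hi, mul_ne_zero hai ((map_ne_zero _).mpr hv0)⟩
      refine ⟨j, ?_, neg_ne_zero.mpr hBj⟩
      rcases (by omega : j ≤ d ∨ j = d + 1) with hj | rfl
      · exact hj
      · exact absurd hvS hBj
    have hg : Set.MapsTo (fun u => σ (u / v) - u / v) S {w | twistedEval σ c d w = 0} :=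
      fun u (hu : twistedEval σ a (d + 1) u = 0) => by
        simp only [Set.mem_ofPred_eq, c, twistedEval_sub_self, mul_div_cancel₀ _ hv0, hu,
          show twistedEval σ a (d + 1) v = 0 from hvS, mul_zero, sub_zero]
    calc S.ncard ≤ (fixedPoints σ).ncard * {w | twistedEval σ c d w = 0}.ncard :=
          Set.ncard_le_mul_ncard_of_mapsTo (Set.toFinite _) (Set.toFinite _) hg fun y _ =>
            (Set.ncard_le_ncard (Set.sep_subset_ofPred _ _)).trans
              (ncard_setOf_sub_self_div_eq_le σ hv0 y)
      _ ≤ (fixedPoints σ).ncard * (fixedPoints σ).ncard ^ d := Nat.mul_le_mul_left _ (ih hc)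
      _ = (fixedPoints σ).ncard ^ (d + 1) := (pow_succ' _ _).symm

end TwistedPolynomial

theorem iterateFrobenius_pow_apply {R : Type*} [CommSemiring R] (p : ℕ) [ExpChar R p] (m i : ℕ)
    (x : R) : (iterateFrobenius R p m ^ i) x = x ^ p ^ (m * i) := by
  rw [RingHom.coe_pow, ← coe_iterateFrobenius_mul, iterateFrobenius_def]

namespace GaloisField

variable {p n m : ℕ} [Fact p.Prime]

theorem pow_char_eq_self_of_mem_fixedPoints (hmn : m.Coprime n) {x : GaloisField p n}
    (hx : x ∈ fixedPoints (iterateFrobenius (GaloisField p n) p m)) : x ^ p = x := by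
  have hxn : x ^ p ^ n = x := by
    rcases eq_or_ne n 0 with rfl | hn
    · exact pow_one x
    have := Fintype.ofFinite (GaloisField p n)
    rw [← card p n hn, Nat.card_eq_fintype_card]
    exact FiniteField.pow_card x
  simpa [Nat.Coprime.gcd_eq_one hmn] using
    pow_pow_gcd_eq_self (Fact.out : p.Prime).ne_zero (show x ^ p ^ m = x from hx) hxn

theorem ncard_fixedPoints_iterateFrobenius_le_two (hmn : m.Coprime n) :
    (fixedPoints (iterateFrobenius (GaloisField 2 n) 2 m)).ncard ≤ 2 :=
  calc _ ≤ ({0, 1} : Set (GaloisField 2 n)).ncard := Set.ncard_le_ncard fun x hx =>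
        eq_zero_or_one_of_sq_eq_self (pow_char_eq_self_of_mem_fixedPoints hmn hx)
    _ ≤ 2 := (Set.ncard_insert_le _ _).trans (by simp)

end GaloisField

section ipow

variable {n : ℕ}

theorem ipow_pow_two_pow (j : ℕ) (x : GaloisField 2 n) : ipow j x ^ 2 ^ j = x :=
  rightInverse_invFun (bijective_iterateFrobenius (GaloisField 2 n) 2 j).surjective x

theorem pow_two_pow_three_mul_eq_twistedEval (k : ℕ) (b c u : GaloisField 2 n) :
    (b * u ^ 2 ^ k + ipow k b * ipow k u + c * u ^ 2 ^ (3 * k) +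
        ipow (3 * k) c * ipow (3 * k) u) ^ 2 ^ (3 * k) =
      twistedEval (iterateFrobenius (GaloisField 2 n) 2 (2 * k))
        (fun i => [c, b ^ 2 ^ (2 * k), b ^ 2 ^ (3 * k), c ^ 2 ^ (3 * k)].getD i 0) 3 u := by
  have hipow : ∀ x : GaloisField 2 n, ipow k x ^ 2 ^ (3 * k) = x ^ 2 ^ (2 * k) := fun x => by
    rw [(by ring : 3 * k = k + 2 * k), pow_add, pow_mul, ipow_pow_two_pow]
  simp only [add_pow_char_pow, mul_pow, hipow, ipow_pow_two_pow, twistedEval, sum_range_succ,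
    sum_range_zero, iterateFrobenius_pow_apply, ← pow_mul, ← pow_add, List.getD_cons_zero,
    List.getD_cons_succ]
  ring_nf

end ipow

theorem stmt_15_general (n k : ℕ) (hn : Odd n) (hkn : Nat.gcd k n = 1)
    (b c : GaloisField 2 n) (hbc : ¬(b = 0 ∧ c = 0)) :
    {u : GaloisField 2 n |
        b * u ^ 2 ^ k + ipow k b * ipow k u + c * u ^ 2 ^ (3 * k) +
          ipow (3 * k) c * ipow (3 * k) u = 0}.ncard ≤ 8 := by
  set σ := iterateFrobenius (GaloisField 2 n) 2 (2 * k)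
  have ha : ∃ i ≤ 3, [c, b ^ 2 ^ (2 * k), b ^ 2 ^ (3 * k), c ^ 2 ^ (3 * k)].getD i 0 ≠ 0 := by
    by_cases hc : c = 0
    · exact ⟨1, by norm_num, by simpa using fun hb => hbc ⟨hb, hc⟩⟩
    · exact ⟨0, by norm_num, hc⟩
  calc _ ≤ {u | twistedEval σ
        (fun i => [c, b ^ 2 ^ (2 * k), b ^ 2 ^ (3 * k), c ^ 2 ^ (3 * k)].getD i 0) 3 u = 0}.ncard :=
        Set.ncard_le_ncard fun u hu => by
          rw [Set.mem_ofPred_eq] at hu ⊢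
          rw [← pow_two_pow_three_mul_eq_twistedEval, hu, zero_pow (by positivity)]
    _ ≤ (fixedPoints σ).ncard ^ 3 := ncard_setOf_twistedEval_eq_zero_le σ ha
    _ ≤ 2 ^ 3 := Nat.pow_le_pow_left
        (GaloisField.ncard_fixedPoints_iterateFrobenius_le_two
          (Nat.Coprime.mul_left hn.coprime_two_left hkn)) 3

/-- The equation `b u^{2^k} + b^{2^{-k}} u^{2^{-k}} + c u^{2^{3k}} + c^{2^{-3k}} u^{2^{-3k}} = 0`
has at most 8 solutions. -/
theorem stmt_15 (n k : ℕ) (hn : Odd n) (hk : 0 < k) (hkn : Nat.gcd k n = 1)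
    (b c : GaloisField 2 n) (hbc : ¬(b = 0 ∧ c = 0)) :
    {u : GaloisField 2 n |
        b * u ^ 2 ^ k + ipow k b * ipow k u + c * u ^ 2 ^ (3 * k) +
          ipow (3 * k) c * ipow (3 * k) u = 0}.ncard ≤ 8 :=
  stmt_15_general n k hn hkn b c hbc
end
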